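/- With the setting of the polar factorization (T optimal from ρ to ν, invertible; U measurable with U(ρ)=ν; R = T⁻¹∘U), the map R minimizes ∫ |U(x) - R'(x)|² dρ(x) over all measurable R' : ℝⁿ → ℝⁿ with R'(ρ) = ρ, and ∫|U - R|² dρ equals the squared Wasserstein-2 distance d²(ρ,ν). -/

import Mathlib

/-!
Write `c` for the quadratic cost. Since `U` and `T` both push `ρ` to `ν` and `T⁻¹ ∘ T = id`
`ρ`-a.e., the cost of `R = T⁻¹ ∘ U` is `∫ c(U, T⁻¹U) dρ = ∫ c(y, T⁻¹y) dν = ∫ c(Tx, x) dρ(x)`,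
the cost of the optimal map `T`. For a `ρ`-preserving `R'` the pair `(R', U)` pushes `ρ` to a
coupling of `ρ` and `ν`, so its cost is at least that of `T`; and `(id, T)` is itself a coupling,
so the cost of `T` is the infimum over couplings.
-/

open MeasureTheory
open scoped ENNReal

namespace MeasureTheory.Measure

variable {α E : Type*} [MeasurableSpace α] [MeasurableSpace E]

def IsCoupling (β : Measure (E × E)) (μ ν : Measure E) : Prop :=
  β.map Prod.fst = μ ∧ β.map Prod.snd = ν

theorem isCoupling_map_prodMk (ρ : Measure α) {f g : α → E} (hf : Measurable f)
    (hg : Measurable g) :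
    IsCoupling (ρ.map fun x => (f x, g x)) (ρ.map f) (ρ.map g) := by
  constructor
  · rw [Measure.map_map measurable_fst (hf.prodMk hg)]; rfl
  · rw [Measure.map_map measurable_snd (hf.prodMk hg)]; rfl

variable {c : E → E → ℝ≥0∞} {ρ : Measure α} {μ ν : Measure E} {a : ℝ≥0∞}

theorem le_lintegral_comp_of_forall_isCoupling (hc : Measurable (Function.uncurry c))
    (hopt : ∀ β, IsCoupling β μ ν → a ≤ ∫⁻ p, c p.1 p.2 ∂β) {f g : α → E}
    (hf : Measurable f) (hg : Measurable g) (hfμ : ρ.map f = μ) (hgν : ρ.map g = ν) :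
    a ≤ ∫⁻ x, c (f x) (g x) ∂ρ := by
  have hβ := isCoupling_map_prodMk ρ hf hg
  rw [hfμ, hgν] at hβ
  calc a ≤ ∫⁻ p, c p.1 p.2 ∂(ρ.map fun x => (f x, g x)) := hopt _ hβ
    _ = ∫⁻ x, c (f x) (g x) ∂ρ := lintegral_map hc (hf.prodMk hg)

theorem lintegral_eq_iInf_isCoupling_of_forall_le {T : E → E}
    (hc : Measurable (Function.uncurry c)) (hT : Measurable T) (hTμ : μ.map T = ν)
    (hopt : ∀ β, IsCoupling β μ ν → ∫⁻ x, c x (T x) ∂μ ≤ ∫⁻ p, c p.1 p.2 ∂β) :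
    ∫⁻ x, c x (T x) ∂μ = ⨅ (β) (_ : IsCoupling β μ ν), ∫⁻ p, c p.1 p.2 ∂β := by
  refine le_antisymm (le_iInf₂ hopt) (iInf₂_le_of_le (μ.map fun x => (x, T x)) ?_ ?_)
  · simpa only [Measure.map_id, id, hTμ] using isCoupling_map_prodMk μ measurable_id hT
  · exact (lintegral_map hc (measurable_id.prodMk hT)).le

theorem lintegral_comp_eq_of_map_eq {U T : α → E} (hU : Measurable U) (hT : Measurable T)
    (hUT : ρ.map U = ρ.map T) {g : E → ℝ≥0∞} (hg : Measurable g) :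
    ∫⁻ x, g (U x) ∂ρ = ∫⁻ x, g (T x) ∂ρ := by
  rw [← lintegral_map hg hU, hUT, lintegral_map hg hT]

theorem lintegral_comp_leftInverse_eq {T Tinv U : E → E}
    (hc : Measurable (Function.uncurry c)) (hT : Measurable T) (hTinv : Measurable Tinv)
    (hU : Measurable U) (hUT : μ.map U = μ.map T) (hinv : ∀ᵐ x ∂μ, Tinv (T x) = x) :
    ∫⁻ x, c (U x) (Tinv (U x)) ∂μ = ∫⁻ x, c (T x) x ∂μ := by
  rw [lintegral_comp_eq_of_map_eq hU hT hUT (g := fun y => c y (Tinv y))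
    (hc.comp (measurable_id.prodMk hTinv))]
  exact lintegral_congr_ae (hinv.mono fun x hx => by simp only [hx])

end MeasureTheory.Measure

open MeasureTheory.Measure

theorem polar_factorization_minimality_general (n : ℕ)
    (ρ ν : Measure (EuclideanSpace ℝ (Fin n)))
    (T Tinv U : EuclideanSpace ℝ (Fin n) → EuclideanSpace ℝ (Fin n))
    (hT : Measurable T) (hTinv : Measurable Tinv) (hU : Measurable U)
    (hTρ : ρ.map T = ν)
    (hopt : ∀ β : Measure (EuclideanSpace ℝ (Fin n) × EuclideanSpace ℝ (Fin n)),
      β.map Prod.fst = ρ → β.map Prod.snd = ν →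
      ∫⁻ x, ENNReal.ofReal (‖x - T x‖ ^ 2) ∂ρ ≤
        ∫⁻ p, ENNReal.ofReal (‖p.1 - p.2‖ ^ 2) ∂β)
    (hinv_left : ∀ᵐ x ∂ρ, Tinv (T x) = x)
    (hUρ : ρ.map U = ν) :
    (∀ R' : EuclideanSpace ℝ (Fin n) → EuclideanSpace ℝ (Fin n), Measurable R' →
      ρ.map R' = ρ →
      ∫⁻ x, ENNReal.ofReal (‖U x - Tinv (U x)‖ ^ 2) ∂ρ ≤
        ∫⁻ x, ENNReal.ofReal (‖U x - R' x‖ ^ 2) ∂ρ) ∧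
    ∫⁻ x, ENNReal.ofReal (‖U x - Tinv (U x)‖ ^ 2) ∂ρ =
      ⨅ (β : Measure (EuclideanSpace ℝ (Fin n) × EuclideanSpace ℝ (Fin n)))
        (_ : β.map Prod.fst = ρ ∧ β.map Prod.snd = ν),
        ∫⁻ p, ENNReal.ofReal (‖p.1 - p.2‖ ^ 2) ∂β := by
  set c : EuclideanSpace ℝ (Fin n) → EuclideanSpace ℝ (Fin n) → ℝ≥0∞ :=
    fun x y => ENNReal.ofReal (‖x - y‖ ^ 2) with hc_def
  have hc : Measurable (Function.uncurry c) :=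
    ((measurable_fst.sub measurable_snd).norm.pow_const 2).ennreal_ofReal
  have hc_comm (x y) : c x y = c y x := by simp only [hc_def, norm_sub_rev]
  have hopt' (β) (hβ : IsCoupling β ρ ν) := hopt β hβ.1 hβ.2
  have hcost_R : ∫⁻ x, c (U x) (Tinv (U x)) ∂ρ = ∫⁻ x, c x (T x) ∂ρ := by
    rw [lintegral_comp_leftInverse_eq hc hT hTinv hU (hUρ.trans hTρ.symm) hinv_left]
    simp only [hc_comm]
  refine ⟨fun R' hR' hR'ρ => ?_, ?_⟩
  · rw [hcost_R]
    simpa only [hc_comm] using le_lintegral_comp_of_forall_isCoupling hc hopt' hR' hU hR'ρ hUρ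
  · rw [hcost_R]
    exact lintegral_eq_iInf_isCoupling_of_forall_le hc hT hTρ hopt'

/-- The rotation R = T⁻¹∘U from the polar factorization minimizes ∫|U - R'|² dρ over all
ρ-preserving maps R', and the minimum equals the squared Wasserstein-2 distance. -/
theorem polar_factorization_minimality (n : ℕ)
    (ρ ν : Measure (EuclideanSpace ℝ (Fin n)))
    [IsProbabilityMeasure ρ] [IsProbabilityMeasure ν]
    (hρ2 : ∫⁻ x, ENNReal.ofReal (‖x‖ ^ 2) ∂ρ < ∞)
    (hν2 : ∫⁻ x, ENNReal.ofReal (‖x‖ ^ 2) ∂ν < ∞)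
    (T Tinv U : EuclideanSpace ℝ (Fin n) → EuclideanSpace ℝ (Fin n))
    (hT : Measurable T) (hTinv : Measurable Tinv) (hU : Measurable U)
    (hTρ : ρ.map T = ν)
    (hopt : ∀ β : Measure (EuclideanSpace ℝ (Fin n) × EuclideanSpace ℝ (Fin n)),
      β.map Prod.fst = ρ → β.map Prod.snd = ν →
      ∫⁻ x, ENNReal.ofReal (‖x - T x‖ ^ 2) ∂ρ ≤
        ∫⁻ p, ENNReal.ofReal (‖p.1 - p.2‖ ^ 2) ∂β)
    (hinv_left : ∀ᵐ x ∂ρ, Tinv (T x) = x)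
    (hinv_right : ∀ᵐ y ∂ν, T (Tinv y) = y)
    (hUρ : ρ.map U = ν) :
    (∀ R' : EuclideanSpace ℝ (Fin n) → EuclideanSpace ℝ (Fin n), Measurable R' →
      ρ.map R' = ρ →
      ∫⁻ x, ENNReal.ofReal (‖U x - Tinv (U x)‖ ^ 2) ∂ρ ≤
        ∫⁻ x, ENNReal.ofReal (‖U x - R' x‖ ^ 2) ∂ρ) ∧
    ∫⁻ x, ENNReal.ofReal (‖U x - Tinv (U x)‖ ^ 2) ∂ρ =
      ⨅ (β : Measure (EuclideanSpace ℝ (Fin n) × EuclideanSpace ℝ (Fin n)))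
        (_ : β.map Prod.fst = ρ ∧ β.map Prod.snd = ν),
        ∫⁻ p, ENNReal.ofReal (‖p.1 - p.2‖ ^ 2) ∂β :=
  polar_factorization_minimality_general n ρ ν T Tinv U hT hTinv hU hTρ hopt hinv_left hUρ
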